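/- arXiv:2509.11358 — 6 statements merged into one kernel-verified Lean document; each statement's English description precedes it below -/
import Mathlib

section
/- For the complete graph K_n and every integer k with 2 ≤ k ≤ n − 1, the k-fair coalition number satisfies C_{kf}(K_n) = n − k + 2. -/
/-- `S` is a `k`-fair dominating set of `G`: every vertex outside `S` has exactly `k`
neighbors in `S`. -/
def SimpleGraph.KFairDom {V : Type*} (G : SimpleGraph V) (k : ℕ) (S : Set V) : Prop :=
  ∀ v ∉ S, (G.neighborSet v ∩ S).ncard = k

/-- Disjoint sets `A`, `B` form a `k`-fair coalition: neither is a `k`-fair dominating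
set, but their union is. -/
def SimpleGraph.KFairCoalition {V : Type*} (G : SimpleGraph V) (k : ℕ) (A B : Set V) : Prop :=
  Disjoint A B ∧ ¬ G.KFairDom k A ∧ ¬ G.KFairDom k B ∧ G.KFairDom k (A ∪ B)

/-- `P` is a `k`-fair coalition partition of `G`: a partition of the vertex set into
nonempty blocks, each of which is either a `k`-fair dominating set with exactly `k`
vertices or forms a `k`-fair coalition with another block. -/
def SimpleGraph.IsKFairCoalPartition {V : Type*} (G : SimpleGraph V) (k : ℕ)
    (P : Set (Set V)) : Prop :=
  (∀ A ∈ P, A.Nonempty) ∧ ⋃₀ P = Set.univ ∧ P.PairwiseDisjoint id ∧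
  ∀ A ∈ P, (G.KFairDom k A ∧ A.ncard = k) ∨
    (¬ G.KFairDom k A ∧ ∃ B ∈ P, B ≠ A ∧ G.KFairCoalition k A B)

/-- The `k`-fair coalition number `C_{kf}(G)`: the maximum size of a `k`-fair coalition
partition of `G`. -/
noncomputable def SimpleGraph.kFairCoalNum {V : Type*} (G : SimpleGraph V) (k : ℕ) : ℕ :=
  sSup {n | ∃ P : Set (Set V), G.IsKFairCoalPartition k P ∧ P.ncard = n}

/-- The `k`-fair domatic number `d_{kf}(G)`: the maximum size of a partition of the
vertex set into `k`-fair dominating sets. -/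
noncomputable def SimpleGraph.kFairDomaticNum {V : Type*} (G : SimpleGraph V) (k : ℕ) : ℕ :=
  sSup {n | ∃ P : Set (Set V), (∀ A ∈ P, A.Nonempty) ∧ ⋃₀ P = Set.univ ∧
    P.PairwiseDisjoint id ∧ (∀ A ∈ P, G.KFairDom k A) ∧ P.ncard = n}

/-! In `K_n` a set is `k`-fair dominating iff it is the whole vertex set or has exactly `k`
vertices. If a coalition partition has at least three blocks, two of them, `A` and `B`, have
`|A ∪ B| ≥ k`: either some block is itself a `k`-set, or a block and its coalition partner miss
the vertices of a third block, so their union is a `k`-set. The remaining blocks are disjoint and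
nonempty inside the complement of `A ∪ B`, so there are at most `n - k` of them. Conversely, a
`(k - 1)`-set `T` together with the `n - k + 1` singletons outside it is a coalition partition:
each singleton completes `T` to a `k`-set. -/

open Set

theorem Set.ncard_le_ncard_sUnion {α : Type*} {P : Set (Set α)} (hP : P.PairwiseDisjoint id)
    (hne : ∀ A ∈ P, A.Nonempty) (hfin : (⋃₀ P).Finite) : P.ncard ≤ (⋃₀ P).ncard := by
  rcases P.eq_empty_or_nonempty with rfl | ⟨A, hA⟩
  · simp
  have : Nonempty α := ⟨(hne A hA).some⟩
  have hmem : ∀ B ∈ P, Classical.epsilon (· ∈ B) ∈ B := fun B hB =>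
    Classical.epsilon_spec (hne B hB)
  refine ncard_le_ncard_of_injOn (fun B => Classical.epsilon (· ∈ B))
    (fun B hB => mem_sUnion_of_mem (hmem B hB) hB) (fun B hB C hC hBC => ?_) hfin
  have hBC' : Classical.epsilon (· ∈ B) = Classical.epsilon (· ∈ C) := hBC
  exact hP.elim hB hC (not_disjoint_iff.2 ⟨_, hmem B hB, hBC' ▸ hmem C hC⟩)

theorem Set.ncard_le_ncard_compl_union_add_two {α : Type*} [Finite α] {P : Set (Set α)}
    (hP : P.PairwiseDisjoint id) (hne : ∀ A ∈ P, A.Nonempty) {A B : Set α} (hA : A ∈ P)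
    (hB : B ∈ P) : P.ncard ≤ (A ∪ B)ᶜ.ncard + 2 := by
  have hrest : ⋃₀ (P \ {A, B}) ⊆ (A ∪ B)ᶜ := by
    rintro x ⟨C, ⟨hC, hCAB⟩, hx⟩ (hxA | hxB)
    · exact disjoint_left.1 (hP hC hA fun h => hCAB (.inl h)) hx hxA
    · exact disjoint_left.1 (hP hC hB fun h => hCAB (.inr h)) hx hxB
  calc P.ncard ≤ (P \ {A, B}).ncard + ({A, B} : Set (Set α)).ncard :=
        ncard_le_ncard_sdiff_add_ncard _ _
    _ ≤ (⋃₀ (P \ {A, B})).ncard + 2 := by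
        gcongr
        · exact ncard_le_ncard_sUnion (hP.subset sdiff_subset) (fun C hC => hne C hC.1)
            (toFinite _)
        · exact (ncard_insert_le _ _).trans (by rw [ncard_singleton])
    _ ≤ (A ∪ B)ᶜ.ncard + 2 := by grw [ncard_le_ncard hrest]

def Set.blockAndSingletons {α : Type*} (T : Set α) : Set (Set α) :=
  insert T ((fun x => {x}) '' Tᶜ)

namespace Set.blockAndSingletons

variable {α : Type*} {T : Set α}

theorem sUnion_eq_univ : ⋃₀ T.blockAndSingletons = univ := by
  refine eq_univ_of_forall fun x => ?_
  by_cases hx : x ∈ T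
  · exact ⟨T, mem_insert _ _, hx⟩
  · exact ⟨{x}, mem_insert_of_mem _ ⟨x, hx, rfl⟩, rfl⟩

theorem pairwiseDisjoint : T.blockAndSingletons.PairwiseDisjoint id := by
  refine pairwiseDisjoint_insert.2 ⟨?_, ?_⟩
  · rintro _ ⟨x, -, rfl⟩ _ ⟨y, -, rfl⟩ hxy
    exact disjoint_singleton.2 fun h => hxy (h ▸ rfl)
  · rintro _ ⟨x, hx, rfl⟩ -
    exact disjoint_singleton_right.2 hx

theorem ncard_eq [Finite α] : T.blockAndSingletons.ncard = Tᶜ.ncard + 1 := by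
  have hT : T ∉ (fun x => {x}) '' Tᶜ := by
    rintro ⟨x, hx, hxT⟩
    exact hx (hxT ▸ mem_singleton x)
  rw [blockAndSingletons, ncard_insert_of_notMem hT, ncard_image_of_injective _ singleton_injective]

end Set.blockAndSingletons

namespace SimpleGraph

variable {V : Type*} {k : ℕ}

theorem top_neighborSet_inter_of_notMem {v : V} {S : Set V} (hv : v ∉ S) :
    (⊤ : SimpleGraph V).neighborSet v ∩ S = S := by
  rw [neighborSet_top, inter_eq_right, subset_compl_singleton_iff]
  exact hv

theorem kFairDom_top_iff {S : Set V} :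
    (⊤ : SimpleGraph V).KFairDom k S ↔ S = univ ∨ S.ncard = k := by
  refine ⟨fun h => or_iff_not_imp_left.2 fun hS => ?_, ?_⟩
  · obtain ⟨v, hv⟩ := (ne_univ_iff_exists_notMem S).1 hS
    simpa only [top_neighborSet_inter_of_notMem hv] using h v hv
  · rintro (rfl | hS) v hv
    · exact absurd (mem_univ v) hv
    · rw [top_neighborSet_inter_of_notMem hv, hS]

theorem kFairDom_top_of_ncard_eq {S : Set V} (hS : S.ncard = k) :
    (⊤ : SimpleGraph V).KFairDom k S :=
  kFairDom_top_iff.2 (Or.inr hS)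

theorem not_kFairDom_top {S : Set V} {a : V} (ha : a ∉ S) (hS : S.ncard ≠ k) :
    ¬ (⊤ : SimpleGraph V).KFairDom k S := by
  rw [kFairDom_top_iff, not_or]
  exact ⟨fun h => ha (h ▸ mem_univ a), hS⟩

theorem KFairCoalition.symm {G : SimpleGraph V} {A B : Set V} (h : G.KFairCoalition k A B) :
    G.KFairCoalition k B A :=
  ⟨h.1.symm, h.2.2.1, h.2.1, union_comm A B ▸ h.2.2.2⟩

theorem kFairCoalition_top {A B : Set V} {a b : V} (ha : a ∉ A) (hb : b ∉ B)
    (hAB : Disjoint A B) (hA : A.ncard ≠ k) (hB : B.ncard ≠ k) (hU : (A ∪ B).ncard = k) :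
    (⊤ : SimpleGraph V).KFairCoalition k A B :=
  ⟨hAB, not_kFairDom_top ha hA, not_kFairDom_top hb hB, kFairDom_top_of_ncard_eq hU⟩

namespace IsKFairCoalPartition

variable [Finite V] {P : Set (Set V)}

theorem exists_le_ncard_union (hP : (⊤ : SimpleGraph V).IsKFairCoalPartition k P)
    (hP3 : 2 < P.ncard) : ∃ A ∈ P, ∃ B ∈ P, k ≤ (A ∪ B).ncard := by
  obtain ⟨hne, -, hdis, hblk⟩ := hP
  obtain ⟨A, hA⟩ := nonempty_of_ncard_ne_zero (by omega : P.ncard ≠ 0)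
  rcases hblk A hA with ⟨-, hAk⟩ | ⟨-, B, hB, -, -, -, -, hAB⟩
  · exact ⟨A, hA, A, hA, by rw [union_self, hAk]⟩
  obtain ⟨C, ⟨hC, hCA⟩, hCB⟩ := exists_ne_of_one_lt_ncard
    (by have := ncard_sdiff_singleton_add_one hA; omega : 1 < (P \ {A}).ncard) B
  obtain ⟨v, hv⟩ := hne C hC
  have hvAB : v ∉ A ∪ B := by
    rintro (hvA | hvB)
    · exact Set.disjoint_left.1 (hdis hC hA hCA) hv hvA
    · exact Set.disjoint_left.1 (hdis hC hB hCB) hv hvB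
  refine ⟨A, hA, B, hB, ((kFairDom_top_iff.1 hAB).resolve_left fun h => hvAB ?_).ge⟩
  exact h ▸ mem_univ v

theorem ncard_le (hP : (⊤ : SimpleGraph V).IsKFairCoalPartition k P) :
    P.ncard ≤ Nat.card V - k + 2 := by
  rcases le_or_gt P.ncard 2 with hP2 | hP3
  · omega
  obtain ⟨A, hA, B, hB, hk⟩ := hP.exists_le_ncard_union hP3
  have := ncard_le_ncard_compl_union_add_two hP.2.2.1 hP.1 hA hB
  rw [ncard_compl] at this
  omega

end IsKFairCoalPartition

theorem isKFairCoalPartition_top_blockAndSingletons {T : Set V} {a c : V} (hk : 2 ≤ k)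
    (hT : T.ncard + 1 = k) (ha : a ∉ T) (hc : c ∈ T) :
    (⊤ : SimpleGraph V).IsKFairCoalPartition k T.blockAndSingletons := by
  have hcoal : ∀ x ∉ T, (⊤ : SimpleGraph V).KFairCoalition k {x} T := fun x hx =>
    kFairCoalition_top (a := c) (b := a) (fun h => hx (mem_singleton_iff.1 h ▸ hc)) ha
      (disjoint_singleton_left.2 hx) (by rw [ncard_singleton]; omega) (by omega)
      (by rw [singleton_union, ncard_insert_of_notMem hx (finite_of_ncard_ne_zero (by omega)),
        hT])
  refine ⟨?_, blockAndSingletons.sUnion_eq_univ, blockAndSingletons.pairwiseDisjoint, ?_⟩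
  · rintro _ (rfl | ⟨x, -, rfl⟩)
    exacts [⟨c, hc⟩, singleton_nonempty x]
  · rintro _ (rfl | ⟨x, hx, rfl⟩)
    · exact .inr ⟨(hcoal a ha).2.2.1, {a}, mem_insert_of_mem _ ⟨a, ha, rfl⟩,
        fun h => ha (h ▸ mem_singleton a), (hcoal a ha).symm⟩
    · exact .inr ⟨(hcoal x hx).2.1, T, mem_insert _ _,
        fun h => hx (h ▸ mem_singleton x), hcoal x hx⟩

theorem exists_isKFairCoalPartition_top [Finite V] (hk : 2 ≤ k) (hkV : k ≤ Nat.card V) :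
    ∃ P, (⊤ : SimpleGraph V).IsKFairCoalPartition k P ∧ P.ncard = Nat.card V - k + 2 := by
  obtain ⟨T, -, hT⟩ := exists_subset_card_eq (s := (univ : Set V)) (n := k - 1)
    (by rw [ncard_univ]; omega)
  obtain ⟨a, ha⟩ :=
    nonempty_of_ncard_ne_zero (by rw [ncard_compl, hT]; omega : Tᶜ.ncard ≠ 0)
  obtain ⟨c, hc⟩ := nonempty_of_ncard_ne_zero (by omega : T.ncard ≠ 0)
  refine ⟨_, isKFairCoalPartition_top_blockAndSingletons hk (by omega) ha hc, ?_⟩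
  rw [blockAndSingletons.ncard_eq, ncard_compl, hT]
  omega

theorem kFairCoalNum_top [Finite V] (hk : 2 ≤ k) (hkV : k ≤ Nat.card V) :
    (⊤ : SimpleGraph V).kFairCoalNum k = Nat.card V - k + 2 := by
  obtain ⟨P, hP, hPcard⟩ := exists_isKFairCoalPartition_top hk hkV
  refine IsGreatest.csSup_eq ⟨⟨P, hP, hPcard⟩, ?_⟩
  rintro _ ⟨Q, hQ, rfl⟩
  exact hQ.ncard_le

end SimpleGraph

theorem kFairCoalNum_completeGraph (n k : ℕ) (hk : 2 ≤ k) (hkn : k ≤ n - 1) :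
    (SimpleGraph.completeGraph (Fin n)).kFairCoalNum k = n - k + 2 := by
  have := SimpleGraph.kFairCoalNum_top (V := Fin n) hk (by rw [Nat.card_fin]; omega)
  rwa [Nat.card_fin] at this
end

section
/- Let K_{s,t} be the complete bipartite graph with parts of sizes s ≤ t, and let k > s. Then the k-fair coalition number is C_{kf}(K_{s,t}) = 2. -/
open Set

section aux
variable {s t : ℕ}

lemma nbhd_inl (a : Fin s) :
    (completeBipartiteGraph (Fin s) (Fin t)).neighborSet (Sum.inl a) = Set.range Sum.inr := by
  ext v; cases v <;> simp [SimpleGraph.neighborSet]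

lemma nbhd_inr (b : Fin t) :
    (completeBipartiteGraph (Fin s) (Fin t)).neighborSet (Sum.inr b) = Set.range Sum.inl := by
  ext v; cases v <;> simp [SimpleGraph.neighborSet]

lemma ncard_rangeL : (Set.range (Sum.inl : Fin s → Fin s ⊕ Fin t)).ncard = s := by
  rw [Set.ncard_eq_toFinset_card']
  simp [Finset.card_image_of_injective _ Sum.inl_injective, Finset.card_image_of_injective _ Sum.inr_injective]

lemma ncard_rangeR : (Set.range (Sum.inr : Fin t → Fin s ⊕ Fin t)).ncard = t := by
  rw [Set.ncard_eq_toFinset_card']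
  simp [Finset.card_image_of_injective _ Sum.inl_injective, Finset.card_image_of_injective _ Sum.inr_injective]
end aux

section aux2
variable {s t k : ℕ}

lemma kfd_univ : (completeBipartiteGraph (Fin s) (Fin t)).KFairDom k Set.univ := by
  intro v hv; simp at hv

lemma kfd_iff (hk : s < k) (S : Set (Fin s ⊕ Fin t)) :
    (completeBipartiteGraph (Fin s) (Fin t)).KFairDom k S ↔
      Set.range Sum.inr ⊆ S ∧ (Set.range Sum.inl ⊆ S ∨ t = k) := by
  constructor
  · intro h
    have hY : Set.range Sum.inr ⊆ S := by
      rintro _ ⟨b, rfl⟩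
      by_contra hb
      have := h _ hb
      rw [nbhd_inr] at this
      have hle : (Set.range (Sum.inl : Fin s → Fin s ⊕ Fin t) ∩ S).ncard ≤ s := by
        have h2 := Set.ncard_le_ncard (Set.inter_subset_left (s := Set.range (Sum.inl : Fin s → Fin s ⊕ Fin t)) (t := S)) (Set.toFinite _)
        rwa [ncard_rangeL] at h2
      omega
    refine ⟨hY, ?_⟩
    by_cases hX : Set.range Sum.inl ⊆ S
    · exact Or.inl hX
    · right
      obtain ⟨v, ⟨a, rfl⟩, ha⟩ := not_subset.1 hX
      have := h _ ha
      rw [nbhd_inl, Set.inter_eq_self_of_subset_left hY, ncard_rangeR] at this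
      exact this
  · rintro ⟨hY, hX⟩ v hv
    cases v with
    | inl a =>
      rw [nbhd_inl, Set.inter_eq_self_of_subset_left hY, ncard_rangeR]
      rcases hX with hX | rfl
      · exact absurd (hX ⟨a, rfl⟩) hv
      · rfl
    | inr b => exact absurd (hY ⟨b, rfl⟩) hv

lemma union_ranges : Set.range (Sum.inl : Fin s → Fin s ⊕ Fin t) ∪ Set.range Sum.inr = Set.univ := by
  ext v; cases v <;> simp

end aux2

theorem kFairCoalNum_completeBipartite_k_gt_s (s t k : ℕ) (hs : 0 < s) (hst : s ≤ t)
    (hk : s < k) : (completeBipartiteGraph (Fin s) (Fin t)).kFairCoalNum k = 2 := by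
  classical
  have ht : 0 < t := lt_of_lt_of_le hs hst
  set G := completeBipartiteGraph (Fin s) (Fin t) with hGdef
  set X : Set (Fin s ⊕ Fin t) := Set.range Sum.inl with hXdef
  set Y : Set (Fin s ⊕ Fin t) := Set.range Sum.inr with hYdef
  set y0 : Fin s ⊕ Fin t := Sum.inr ⟨0, ht⟩ with hy0def
  have hy0Y : y0 ∈ Y := ⟨_, rfl⟩
  have hx0X : Sum.inl (⟨0, hs⟩ : Fin s) ∈ X := ⟨_, rfl⟩
  have hkfd_sub : ∀ S : Set (Fin s ⊕ Fin t), G.KFairDom k S → Y ⊆ S := by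
    intro S hS
    exact ((kfd_iff hk S).1 hS).1
  -- membership : there is a partition of size 2
  have hmem : ∃ P : Set (Set (Fin s ⊕ Fin t)), G.IsKFairCoalPartition k P ∧ P.ncard = 2 := by
    by_cases htk : t = k
    · -- t = k : use {X ∪ {y0}, Y \ {y0}}
      have ht2 : 2 ≤ t := by omega
      set y1 : Fin s ⊕ Fin t := Sum.inr ⟨1, by omega⟩ with hy1def
      have hy1Y : y1 ∈ Y := ⟨_, rfl⟩
      have hy10 : y1 ≠ y0 := by simp [hy1def, hy0def]
      set A : Set (Fin s ⊕ Fin t) := X ∪ {y0} with hAdef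
      set B : Set (Fin s ⊕ Fin t) := Y \ {y0} with hBdef
      have hy1B : y1 ∈ B := ⟨hy1Y, hy10⟩
      have hy0A : y0 ∈ A := Or.inr rfl
      have hy0B : y0 ∉ B := fun h => h.2 rfl
      have hAB : A ≠ B := fun h => hy0B (h ▸ hy0A)
      have hnA : ¬ G.KFairDom k A := by
        intro h
        have := hkfd_sub A h hy1Y
        rcases this with ⟨a, ha⟩ | h1
        · exact Sum.inl_ne_inr (ha.trans hy1def)
        · exact hy10 h1
      have hnB : ¬ G.KFairDom k B := fun h => hy0B (hkfd_sub B h hy0Y)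
      have hU : A ∪ B = Set.univ := by
        ext v
        simp only [Set.mem_univ, iff_true]
        cases v with
        | inl a => exact Or.inl (Or.inl ⟨a, rfl⟩)
        | inr b =>
          by_cases hb : Sum.inr b = y0
          · exact Or.inl (Or.inr hb)
          · exact Or.inr ⟨⟨b, rfl⟩, hb⟩
      have hdisj : Disjoint A B := by
        rw [Set.disjoint_left]
        rintro v (⟨a, rfl⟩ | hv) hvB
        · rcases hvB.1 with ⟨b, hb⟩; exact Sum.inr_ne_inl hb
        · exact hvB.2 hv
      have hkU : G.KFairDom k (A ∪ B) := hU ▸ kfd_univ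
      refine ⟨{A, B}, ⟨?_, ?_, ?_, ?_⟩, Set.ncard_pair hAB⟩
      · rintro C (rfl | rfl)
        exacts [⟨y0, hy0A⟩, ⟨y1, hy1B⟩]
      · rw [Set.sUnion_insert, Set.sUnion_singleton, hU]
      · rintro C (rfl | rfl) D (rfl | rfl) hne
        · exact absurd rfl hne
        · exact hdisj
        · exact hdisj.symm
        · exact absurd rfl hne
      · rintro C (rfl | rfl)
        · exact Or.inr ⟨hnA, B, Or.inr rfl, hAB.symm, hdisj, hnA, hnB, hkU⟩
        · refine Or.inr ⟨hnB, A, Or.inl rfl, hAB, hdisj.symm, hnB, hnA, ?_⟩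
          rwa [Set.union_comm]
    · -- t ≠ k : use {X, Y}
      have hXY : X ≠ Y := by
        intro h
        rcases h ▸ hx0X with ⟨b, hb⟩
        exact Sum.inr_ne_inl hb
      have hy0X : y0 ∉ X := by rintro ⟨a, ha⟩; exact Sum.inl_ne_inr (ha.trans hy0def)
      have hx0Y : Sum.inl (⟨0, hs⟩ : Fin s) ∉ Y := by
        rintro ⟨b, hb⟩; exact Sum.inr_ne_inl hb
      have hnX : ¬ G.KFairDom k X := fun h => hy0X (hkfd_sub X h hy0Y)
      have hnY : ¬ G.KFairDom k Y := by
        intro h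
        rcases ((kfd_iff hk Y).1 h).2 with hXsub | h1
        · exact hx0Y (hXsub hx0X)
        · exact htk h1
      have hdisj : Disjoint X Y := by
        rw [Set.disjoint_left]
        rintro v ⟨a, rfl⟩ ⟨b, hb⟩
        exact Sum.inr_ne_inl hb
      have hkU : G.KFairDom k (X ∪ Y) := union_ranges ▸ kfd_univ
      refine ⟨{X, Y}, ⟨?_, ?_, ?_, ?_⟩, Set.ncard_pair hXY⟩
      · rintro C (rfl | rfl)
        exacts [⟨_, hx0X⟩, ⟨y0, hy0Y⟩]
      · rw [Set.sUnion_insert, Set.sUnion_singleton]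
        exact union_ranges
      · rintro C (rfl | rfl) D (rfl | rfl) hne
        · exact absurd rfl hne
        · exact hdisj
        · exact hdisj.symm
        · exact absurd rfl hne
      · rintro C (rfl | rfl)
        · exact Or.inr ⟨hnX, Y, Or.inr rfl, hXY.symm, hdisj, hnX, hnY, hkU⟩
        · refine Or.inr ⟨hnY, X, Or.inl rfl, hXY, hdisj.symm, hnY, hnX, ?_⟩
          rwa [Set.union_comm]
  -- upper bound
  have hbd : ∀ n ∈ {n | ∃ P : Set (Set (Fin s ⊕ Fin t)),
      G.IsKFairCoalPartition k P ∧ P.ncard = n}, n ≤ 2 := by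
    rintro n ⟨P, ⟨hne, hcov, hdis, hblk⟩, rfl⟩
    have hy0cov : y0 ∈ ⋃₀ P := hcov ▸ Set.mem_univ y0
    obtain ⟨D, hD, hy0D⟩ := hy0cov
    rcases hblk D hD with ⟨hDk, _⟩ | ⟨hDn, D', hD', hD'ne, hco⟩
    · -- D is k-fair dominating: P ⊆ {D}
      have hsub : P ⊆ {D} := by
        intro E hE
        by_contra hED
        simp only [Set.mem_singleton_iff] at hED
        have hEn : ¬ G.KFairDom k E := by
          intro h
          have := hkfd_sub E h hy0Y
          exact (Set.disjoint_left.1 (hdis hE hD hED)) this hy0D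
        rcases hblk E hE with ⟨h1, _⟩ | ⟨_, E', hE', hE'ne, _, _, hE'n, hkEU⟩
        · exact hEn h1
        · have hE'D : E' ≠ D := fun h => hE'n (h ▸ hDk)
          have := hkfd_sub _ hkEU hy0Y
          rcases this with h | h
          · exact (Set.disjoint_left.1 (hdis hE hD hED)) h hy0D
          · exact (Set.disjoint_left.1 (hdis hE' hD hE'D)) h hy0D
      calc P.ncard ≤ ({D} : Set (Set (Fin s ⊕ Fin t))).ncard :=
            Set.ncard_le_ncard hsub (Set.toFinite _)
        _ ≤ 2 := by rw [Set.ncard_singleton]; omega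
    · -- D is in a coalition with D'
      obtain ⟨hdisDD', hnD, hnD', hkDD'⟩ := hco
      have hYDD' : Y ⊆ D ∪ D' := hkfd_sub _ hkDD'
      have hsub : P ⊆ {D, D'} := by
        intro E hE
        by_contra hEmem
        simp only [Set.mem_insert_iff, Set.mem_singleton_iff, not_or] at hEmem
        obtain ⟨hED, hED'⟩ := hEmem
        have hdisED : Disjoint E D := hdis hE hD hED
        have hdisED' : Disjoint E D' := hdis hE hD' hED'
        have hEn : ¬ G.KFairDom k E := fun h =>
          (Set.disjoint_left.1 hdisED) (hkfd_sub E h hy0Y) hy0D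
        rcases hblk E hE with ⟨h1, _⟩ | ⟨_, E', hE'P, hE'ne, _, _, hE'n, hkEU⟩
        · exact hEn h1
        · by_cases htk : t = k
          · -- t = k : derive that D is k-fair dominating, contradiction
            have hYEE' : Y ⊆ E ∪ E' := hkfd_sub _ hkEU
            have hy0E' : y0 ∈ E' := by
              rcases hYEE' hy0Y with h | h
              · exact absurd hy0D ((Set.disjoint_left.1 hdisED) h)
              · exact h
            have hE'D : E' = D := by
              by_contra hne'
              exact (Set.disjoint_left.1 (hdis hE'P hD hne')) hy0E' hy0D
            subst hE'D
            apply hnD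
            rw [kfd_iff hk]
            refine ⟨?_, Or.inr htk⟩
            intro y hy
            rcases hYDD' hy with h | h
            · exact h
            · rcases hYEE' hy with h2 | h2
              · exact absurd h ((Set.disjoint_left.1 hdisED') h2)
              · exact h2
          · -- t ≠ k : D ∪ D' = univ, so E is empty
            have hXDD' : X ⊆ D ∪ D' := by
              rcases ((kfd_iff hk _).1 hkDD').2 with h | h
              · exact h
              · exact absurd h htk
            obtain ⟨e, he⟩ := hne E hE
            have : e ∈ D ∪ D' := by
              have : e ∈ X ∪ Y := union_ranges (s := s) (t := t) ▸ Set.mem_univ e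
              rcases this with h | h
              · exact hXDD' h
              · exact hYDD' h
            rcases this with h | h
            · exact (Set.disjoint_left.1 hdisED) he h
            · exact (Set.disjoint_left.1 hdisED') he h
      calc P.ncard ≤ ({D, D'} : Set (Set (Fin s ⊕ Fin t))).ncard :=
            Set.ncard_le_ncard hsub (Set.toFinite _)
        _ ≤ 2 := by
            apply le_trans (Set.ncard_insert_le _ _)
            rw [Set.ncard_singleton]
  -- conclude
  rw [SimpleGraph.kFairCoalNum]
  apply le_antisymm
  · exact csSup_le ⟨2, hmem⟩ hbd
  · exact le_csSup ⟨2, hbd⟩ hmem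
end

section
/- For the cycle C_n on n ≥ 3 vertices, the 2-fair coalition number is C_{2f}(C_n) = 4 if n is even, and C_{2f}(C_n) = 3 if n is odd. -/
/-!
On a 2-regular graph a set is 2-fair dominating exactly when it is a vertex cover. For `n ≥ 5`
no two vertices cover `C_n`, so every block of a 2-fair coalition partition is a non-cover with
a coalition partner. A block with three partners would itself be a cover, and two disjoint
coalitions are two disjoint covers, which properly 2-colour `C_n` and exhaust its vertices. Hence
four or more blocks force `n` even and exactly four blocks. The partitions `{0}, {1}, rest` and
`{0}, {1}, other evens, other odds` attain the bounds.
-/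

-- Read `R` as a graph on `P` with minimum degree at least one and maximum degree at most two.
theorem Set.exists_disjoint_pairs_of_three_lt_ncard {α : Type*} {P : Set α} {R : α → α → Prop}
    (hsymm : ∀ a b, R a b → R b a) (hpartner : ∀ a ∈ P, ∃ b ∈ P, b ≠ a ∧ R a b)
    (hthree : ∀ a ∈ P, ∀ b ∈ P, ∀ c ∈ P, ∀ d ∈ P,
      b ≠ c → b ≠ d → c ≠ d → R a b → R a c → R a d → False)
    (hP : 3 < P.ncard) :
    ∃ a ∈ P, ∃ b ∈ P, ∃ c ∈ P, ∃ d ∈ P, a ≠ c ∧ a ≠ d ∧ b ≠ c ∧ b ≠ d ∧ R a b ∧ R c d := by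
  have hfin : P.Finite := Set.finite_of_ncard_pos (by omega)
  obtain ⟨a, ha⟩ := Set.nonempty_of_ncard_ne_zero (by omega : P.ncard ≠ 0)
  obtain ⟨b, hb, hba, hab⟩ := hpartner a ha
  have hrest : 1 < (P \ {a, b}).ncard := by
    have := Set.le_ncard_sdiff {a, b} P
    have := Set.ncard_pair hba.symm
    omega
  obtain ⟨c, d, ⟨hc, hcab⟩, ⟨hd, hdab⟩, hcd⟩ := (Set.one_lt_ncard_iff hfin.sdiff).mp hrest
  simp only [Set.mem_insert_iff, Set.mem_singleton_iff, not_or] at hcab hdab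
  obtain ⟨e, he, -, hce⟩ := hpartner c hc
  by_cases heab : e ≠ a ∧ e ≠ b
  · exact ⟨a, ha, b, hb, c, hc, e, he, Ne.symm hcab.1, Ne.symm heab.1, Ne.symm hcab.2,
      Ne.symm heab.2, hab, hce⟩
  obtain ⟨f, hf, -, hdf⟩ := hpartner d hd
  by_cases hfab : f ≠ a ∧ f ≠ b
  · exact ⟨a, ha, b, hb, d, hd, f, hf, Ne.symm hdab.1, Ne.symm hfab.1, Ne.symm hdab.2,
      Ne.symm hfab.2, hab, hdf⟩
  rw [not_and_or, not_ne_iff, not_ne_iff] at heab hfab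
  rcases heab with h | h <;> rcases hfab with h' | h' <;> rw [h] at hce <;> rw [h'] at hdf
  · exact (hthree a ha b hb c hc d hd (Ne.symm hcab.2) (Ne.symm hdab.2) hcd hab
      (hsymm _ _ hce) (hsymm _ _ hdf)).elim
  · exact ⟨c, hc, a, ha, d, hd, b, hb, hcd, hcab.2, Ne.symm hdab.1, hba.symm, hce, hdf⟩
  · exact ⟨c, hc, b, hb, d, hd, a, ha, hcd, hcab.1, Ne.symm hdab.2, hba, hce, hdf⟩
  · exact (hthree b hb a ha c hc d hd (Ne.symm hcab.1) (Ne.symm hdab.1) hcd (hsymm _ _ hab)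
      (hsymm _ _ hce) (hsymm _ _ hdf)).elim

namespace SimpleGraph

variable {V : Type*} {G : SimpleGraph V}

theorem IsRegularOfDegree.kFairDom_iff_isVertexCover [G.LocallyFinite] {k : ℕ}
    (hG : G.IsRegularOfDegree k) {S : Set V} : G.KFairDom k S ↔ G.IsVertexCover S := by
  have hN : ∀ v, (G.neighborSet v).ncard = k := fun v => by
    rw [Set.ncard_eq_toFinset_card', ← neighborFinset_def, card_neighborFinset_eq_degree, hG v]
  have key : ∀ v, (G.neighborSet v ∩ S).ncard = k ↔ G.neighborSet v ⊆ S := fun v => by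
    rw [← hN v, ← Set.inter_eq_left]
    exact ⟨fun h => Set.eq_of_subset_of_ncard_le Set.inter_subset_left h.ge, congrArg Set.ncard⟩
  simp only [KFairDom, key]
  exact ⟨fun h v w hvw => or_iff_not_imp_left.mpr fun hv => h v hv hvw,
    fun h v hv w hvw => (h hvw).resolve_left hv⟩

theorem Coloring.isVertexCover_compl_colorClass (C : G.Coloring Bool) (b : Bool) :
    G.IsVertexCover (C.colorClass b)ᶜ :=
  isVertexCover_compl.mpr (C.isIndepSet_colorClass b)

theorem isVertexCover_compl_singleton (v : V) : G.IsVertexCover {v}ᶜ :=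
  isVertexCover_compl.mpr (Set.pairwise_singleton _ _)

-- An edge missing `A` meets each of `X`, `Y`, `Z`, so two of them share one of its endpoints.
theorem IsVertexCover.of_union_of_pairwiseDisjoint {A X Y Z : Set V}
    (hXY : Disjoint X Y) (hXZ : Disjoint X Z) (hYZ : Disjoint Y Z)
    (hX : G.IsVertexCover (A ∪ X)) (hY : G.IsVertexCover (A ∪ Y))
    (hZ : G.IsVertexCover (A ∪ Z)) : G.IsVertexCover A := by
  intro u v huv
  by_contra! hA
  have hX := hX huv; have hY := hY huv; have hZ := hZ huv
  simp only [Set.mem_union, hA.1, hA.2, false_or] at hX hY hZ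
  rcases hX with hX | hX <;> rcases hY with hY | hY <;> rcases hZ with hZ | hZ
  all_goals first
    | exact Set.disjoint_left.mp hXY hX hY
    | exact Set.disjoint_left.mp hXZ hX hZ
    | exact Set.disjoint_left.mp hYZ hY hZ

theorem IsVertexCover.colorable_two_of_disjoint {S T : Set V} (hS : G.IsVertexCover S)
    (hT : G.IsVertexCover T) (hST : Disjoint S T) : G.Colorable 2 := by
  classical
  refine (Coloring.mk (fun v => decide (v ∈ S)) fun {u v} huv => ?_).colorable
  have := Set.disjoint_left.mp hST
  rcases hS huv with hu | hv <;> rcases hT huv with hu' | hv'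
  all_goals grind

theorem IsVertexCover.union_eq_univ_of_disjoint {S T : Set V} (hS : G.IsVertexCover S)
    (hT : G.IsVertexCover T) (hST : Disjoint S T) (hG : ∀ v, ∃ w, G.Adj v w) :
    S ∪ T = Set.univ := by
  refine Set.eq_univ_of_forall fun v => ?_
  obtain ⟨w, hvw⟩ := hG v
  by_contra! hv
  simp only [Set.mem_union, not_or] at hv
  exact Set.disjoint_left.mp hST ((hS hvw).resolve_left hv.1) ((hT hvw).resolve_left hv.2)

variable {k : ℕ} {P : Set (Set V)}

theorem IsKFairCoalPartition.ncard_le_s10 [Finite V] (hP : G.IsKFairCoalPartition k P) :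
    P.ncard ≤ Nat.card V := by
  rw [← Nat.card_coe_set_eq]
  refine Nat.card_le_card_of_injective (fun A => (hP.1 A A.2).some) fun A B hAB => ?_
  by_contra hne
  refine Set.disjoint_left.mp (hP.2.2.1 A.2 B.2 (Subtype.coe_ne_coe.mpr hne))
    (hP.1 A A.2).some_mem ?_
  exact (congrArg (· ∈ B.1) hAB).mpr (hP.1 B B.2).some_mem

theorem kFairCoalNum_eq {N : ℕ} (hle : ∀ P, G.IsKFairCoalPartition k P → P.ncard ≤ N)
    (hex : ∃ P, G.IsKFairCoalPartition k P ∧ P.ncard = N) : G.kFairCoalNum k = N :=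
  IsGreatest.csSup_eq ⟨hex, by rintro _ ⟨P, hP, rfl⟩; exact hle P hP⟩

section Fibers

variable {ι : Type*} {c : V → ι}

theorem injective_preimage_singleton (hc : Function.Surjective c) :
    Function.Injective fun i => c ⁻¹' {i} :=
  (Set.preimage_injective.mpr hc).comp Set.singleton_injective

theorem isKFairCoalPartition_range_preimage (hc : Function.Surjective c)
    (hnot : ∀ i, ¬ G.KFairDom k (c ⁻¹' {i}))
    (hpair : ∀ i, ∃ j ≠ i, G.KFairDom k (c ⁻¹' {i, j})) :
    G.IsKFairCoalPartition k (Set.range fun i => c ⁻¹' {i}) := by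
  have hdisj : ∀ {i j}, i ≠ j → Disjoint (c ⁻¹' {i}) (c ⁻¹' {j}) := fun hij =>
    Disjoint.preimage c (Set.disjoint_singleton.mpr hij)
  refine ⟨?_, ?_, ?_, ?_⟩
  · rintro _ ⟨i, rfl⟩
    exact (hc i).imp fun v hv => hv
  · rw [Set.sUnion_range, ← Set.preimage_iUnion, Set.iUnion_of_singleton, Set.preimage_univ]
  · rintro _ ⟨i, rfl⟩ _ ⟨j, rfl⟩ hne
    exact hdisj fun hij => hne (hij ▸ rfl)
  · rintro _ ⟨i, rfl⟩
    obtain ⟨j, hji, hij⟩ := hpair i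
    refine .inr ⟨hnot i, c ⁻¹' {j}, ⟨j, rfl⟩, fun h => hji (injective_preimage_singleton hc h),
      hdisj hji.symm, hnot i, hnot j, ?_⟩
    rwa [← Set.preimage_union, Set.singleton_union]

theorem ncard_range_preimage_singleton (hc : Function.Surjective c) :
    (Set.range fun i => c ⁻¹' {i}).ncard = Nat.card ι :=
  Set.ncard_range_of_injective (injective_preimage_singleton hc)

end Fibers

section Cycle

variable {m : ℕ} {S : Set (Fin (m + 3))}

theorem cycleGraph_adj_add_one (v : Fin (m + 2)) : (cycleGraph (m + 2)).Adj v (v + 1) := by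
  simp [cycleGraph_adj]

theorem cycleGraph_adj_of_val_add_one {n : ℕ} {u v : Fin n} (h : u.val + 1 = v.val) :
    (cycleGraph n).Adj u v :=
  pathGraph_le_cycleGraph (pathGraph_adj.mpr (.inl h))

theorem isRegularOfDegree_cycleGraph : (cycleGraph (m + 3)).IsRegularOfDegree 2 :=
  fun _ => cycleGraph_degree_three_le

theorem kFairDom_two_cycleGraph_iff :
    (cycleGraph (m + 3)).KFairDom 2 S ↔ (cycleGraph (m + 3)).IsVertexCover S :=
  isRegularOfDegree_cycleGraph.kFairDom_iff_isVertexCover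

theorem IsVertexCover.le_two_mul_ncard_cycleGraph (hS : (cycleGraph (m + 3)).IsVertexCover S) :
    m + 3 ≤ 2 * S.ncard := by
  have hcompl : Sᶜ.ncard ≤ S.ncard :=
    Set.ncard_le_ncard_of_injOn (· + 1)
      (fun v hv => (hS (cycleGraph_adj_add_one v)).resolve_left hv)
      (fun _ _ _ _ h => add_right_cancel h)
  have := Set.ncard_add_ncard_compl S
  simp only [Nat.card_eq_fintype_card, Fintype.card_fin] at this
  omega

theorem not_colorable_two_cycleGraph_of_odd {n : ℕ} (hn : Odd n) (h2 : 2 ≤ n) :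
    ¬ (cycleGraph n).Colorable 2 := fun h => by
  have := h.chromaticNumber_le
  rw [chromaticNumber_cycleGraph_of_odd n h2 hn] at this
  norm_num at this

section CoalitionPartition

variable {P : Set (Set (Fin (m + 3)))}

theorem IsKFairCoalPartition.exists_partner_cycleGraph (hm : 2 ≤ m)
    (hP : (cycleGraph (m + 3)).IsKFairCoalPartition 2 P) {A : Set (Fin (m + 3))} (hA : A ∈ P) :
    ¬ (cycleGraph (m + 3)).IsVertexCover A ∧
      ∃ B ∈ P, B ≠ A ∧ (cycleGraph (m + 3)).IsVertexCover (A ∪ B) := by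
  simp only [← kFairDom_two_cycleGraph_iff]
  rcases hP.2.2.2 A hA with ⟨hdom, hcard⟩ | ⟨hnot, B, hB, hBA, hcoal⟩
  · have := (kFairDom_two_cycleGraph_iff.mp hdom).le_two_mul_ncard_cycleGraph
    omega
  · exact ⟨hnot, B, hB, hBA, hcoal.2.2.2⟩

theorem IsKFairCoalPartition.even_and_ncard_le_four_cycleGraph (hm : 2 ≤ m)
    (hP : (cycleGraph (m + 3)).IsKFairCoalPartition 2 P) (h3 : 3 < P.ncard) :
    Even (m + 3) ∧ P.ncard ≤ 4 := by
  have hpd : P.PairwiseDisjoint id := hP.2.2.1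
  obtain ⟨a, ha, b, hb, c, hc, d, hd, hac, had, hbc, hbd, hab, hcd⟩ :=
    Set.exists_disjoint_pairs_of_three_lt_ncard
      (R := fun A B => (cycleGraph (m + 3)).IsVertexCover (A ∪ B))
      (fun A B h => Set.union_comm A B ▸ h) (fun A hA => (hP.exists_partner_cycleGraph hm hA).2)
      (fun A hA B hB C hC D hD hBC hBD hCD hAB hAC hAD =>
        (hP.exists_partner_cycleGraph hm hA).1 <| hAB.of_union_of_pairwiseDisjoint
          (hpd hB hC hBC) (hpd hB hD hBD) (hpd hC hD hCD) hAC hAD) h3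
  have hdisj : Disjoint (a ∪ b) (c ∪ d) :=
    Disjoint.union_left (.union_right (hpd ha hc hac) (hpd ha hd had))
      (.union_right (hpd hb hc hbc) (hpd hb hd hbd))
  refine ⟨?_, ?_⟩
  · by_contra hodd
    exact not_colorable_two_cycleGraph_of_odd (Nat.not_even_iff_odd.mp hodd) (by omega)
      (hab.colorable_two_of_disjoint hcd hdisj)
  · have huniv := hab.union_eq_univ_of_disjoint hcd hdisj fun v => ⟨v + 1, cycleGraph_adj_add_one v⟩
    have hsub : P ⊆ {a, b, c, d} := by
      intro E hE
      obtain ⟨v, hv⟩ := hP.1 E hE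
      have hv' : v ∈ (a ∪ b) ∪ (c ∪ d) := huniv ▸ Set.mem_univ v
      simp only [Set.mem_union] at hv'
      simp only [Set.mem_insert_iff, Set.mem_singleton_iff]
      rcases hv' with (h | h) | (h | h)
      · exact .inl (hpd.elim_set hE ha v hv h)
      · exact .inr <| .inl (hpd.elim_set hE hb v hv h)
      · exact .inr <| .inr <| .inl (hpd.elim_set hE hc v hv h)
      · exact .inr <| .inr <| .inr (hpd.elim_set hE hd v hv h)
    calc P.ncard ≤ ({a, b, c, d} : Set (Set (Fin (m + 3)))).ncard := Set.ncard_le_ncard hsub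
      _ ≤ 4 := by
        classical
        rw [← Finset.coe_pair, ← Finset.coe_insert, ← Finset.coe_insert, Set.ncard_coe_finset]
        exact Finset.card_le_four

theorem IsKFairCoalPartition.ncard_le_cycleGraph
    (hP : (cycleGraph (m + 3)).IsKFairCoalPartition 2 P) :
    P.ncard ≤ 4 ∧ (Odd (m + 3) → P.ncard ≤ 3) := by
  have hle : P.ncard ≤ m + 3 := by simpa using hP.ncard_le_s10
  by_cases hm : 2 ≤ m
  · by_cases h3 : 3 < P.ncard
    · obtain ⟨heven, h4⟩ := hP.even_and_ncard_le_four_cycleGraph hm h3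
      exact ⟨h4, fun hodd => absurd heven (Nat.not_even_iff_odd.mpr hodd)⟩
    · exact ⟨by omega, fun _ => by omega⟩
  · refine ⟨by omega, fun hodd => ?_⟩
    obtain rfl : m = 0 := by rcases hodd with ⟨k, hk⟩; omega
    exact hle

end CoalitionPartition

section Constructions

def threeBlockLabel (n : ℕ) (v : Fin n) : Fin 3 :=
  if v.val = 0 then 0 else if v.val = 1 then 1 else 2

def fourBlockLabel (n : ℕ) (v : Fin n) : Fin 4 :=
  if v.val = 0 then 0 else if v.val = 1 then 1 else if v.val % 2 = 0 then 2 else 3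

theorem exists_isKFairCoalPartition_cycleGraph_ncard_three :
    ∃ P, (cycleGraph (m + 3)).IsKFairCoalPartition 2 P ∧ P.ncard = 3 := by
  have hc : Function.Surjective (threeBlockLabel (m + 3)) := by
    intro i
    fin_cases i
    exacts [⟨⟨0, by omega⟩, rfl⟩, ⟨⟨1, by omega⟩, rfl⟩, ⟨⟨2, by omega⟩, rfl⟩]
  refine ⟨_, isKFairCoalPartition_range_preimage hc (fun i hi => ?_) (fun i => ?_), by
    rw [ncard_range_preimage_singleton hc, Nat.card_eq_fintype_card, Fintype.card_fin]⟩
  · rw [kFairDom_two_cycleGraph_iff] at hi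
    fin_cases i
    · have := hi (cycleGraph_adj_of_val_add_one (u := ⟨1, by omega⟩) (v := ⟨2, by omega⟩) rfl)
      simp [threeBlockLabel] at this
    · have := hi (cycleGraph_adj_add_one (Fin.last (m + 2)))
      simp [threeBlockLabel] at this
    · have := hi (cycleGraph_adj_of_val_add_one (u := ⟨0, by omega⟩) (v := ⟨1, by omega⟩) rfl)
      simp [threeBlockLabel] at this
  · obtain ⟨j, hji, x, hx⟩ :
        ∃ j ≠ i, ∃ x : Fin (m + 3), {x}ᶜ ⊆ threeBlockLabel (m + 3) ⁻¹' {i, j} := by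
      fin_cases i <;> [refine ⟨2, by decide, ⟨1, by omega⟩, ?_⟩;
        refine ⟨2, by decide, ⟨0, by omega⟩, ?_⟩; refine ⟨0, by decide, ⟨1, by omega⟩, ?_⟩] <;>
      · intro v hv
        simp only [Set.mem_compl_iff, Set.mem_singleton_iff, Fin.ext_iff] at hv
        simp only [Set.mem_preimage, Set.mem_insert_iff, Set.mem_singleton_iff, threeBlockLabel]
        split_ifs <;> simp_all
    exact ⟨j, hji, kFairDom_two_cycleGraph_iff.mpr ((isVertexCover_compl_singleton x).subset hx)⟩

theorem exists_isKFairCoalPartition_cycleGraph_ncard_four (heven : Even (m + 3)) :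
    ∃ P, (cycleGraph (m + 3)).IsKFairCoalPartition 2 P ∧ P.ncard = 4 := by
  have hm : 1 ≤ m := by rcases heven with ⟨k, hk⟩; omega
  have hc : Function.Surjective (fourBlockLabel (m + 3)) := by
    intro i
    fin_cases i
    exacts [⟨⟨0, by omega⟩, rfl⟩, ⟨⟨1, by omega⟩, rfl⟩, ⟨⟨2, by omega⟩, by simp [fourBlockLabel]⟩,
      ⟨⟨3, by omega⟩, by simp [fourBlockLabel]⟩]
  refine ⟨_, isKFairCoalPartition_range_preimage hc (fun i hi => ?_) (fun i => ?_), by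
    rw [ncard_range_preimage_singleton hc, Nat.card_eq_fintype_card, Fintype.card_fin]⟩
  · rw [kFairDom_two_cycleGraph_iff] at hi
    fin_cases i
    · have := hi (cycleGraph_adj_of_val_add_one (u := ⟨1, by omega⟩) (v := ⟨2, by omega⟩) rfl)
      simp [fourBlockLabel] at this
    · have := hi (cycleGraph_adj_of_val_add_one (u := ⟨2, by omega⟩) (v := ⟨3, by omega⟩) rfl)
      simp [fourBlockLabel] at this
    all_goals
      have := hi (cycleGraph_adj_of_val_add_one (u := ⟨0, by omega⟩) (v := ⟨1, by omega⟩) rfl)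
      simp [fourBlockLabel] at this
  · obtain ⟨j, hji, b, hb⟩ : ∃ j ≠ i, ∃ b, ((cycleGraph.bicoloring_of_even _ heven).colorClass b)ᶜ ⊆
        fourBlockLabel (m + 3) ⁻¹' {i, j} := by
      fin_cases i <;> [refine ⟨2, by decide, false, ?_⟩; refine ⟨3, by decide, true, ?_⟩;
        refine ⟨0, by decide, false, ?_⟩; refine ⟨1, by decide, true, ?_⟩] <;>
      · intro v hv
        simp only [Set.mem_compl_iff, Coloring.colorClass, Set.mem_ofPred_eq,
          cycleGraph.bicoloring_of_even, Coloring.mk] at hv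
        simp only [Set.mem_preimage, Set.mem_insert_iff, Set.mem_singleton_iff, fourBlockLabel]
        split_ifs <;> simp_all
    exact ⟨j, hji, kFairDom_two_cycleGraph_iff.mpr
      ((Coloring.isVertexCover_compl_colorClass _ b).subset hb)⟩

end Constructions

end Cycle

end SimpleGraph

theorem twoFairCoalNum_cycleGraph (n : ℕ) (hn : 3 ≤ n) :
    (Even n → (SimpleGraph.cycleGraph n).kFairCoalNum 2 = 4) ∧
    (Odd n → (SimpleGraph.cycleGraph n).kFairCoalNum 2 = 3) := by
  obtain ⟨m, rfl⟩ : ∃ m, n = m + 3 := ⟨n - 3, by omega⟩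
  open SimpleGraph in
  exact ⟨fun heven => kFairCoalNum_eq (fun _ hP => hP.ncard_le_cycleGraph.1)
      (exists_isKFairCoalPartition_cycleGraph_ncard_four heven),
    fun hodd => kFairCoalNum_eq (fun _ hP => hP.ncard_le_cycleGraph.2 hodd)
      exists_isKFairCoalPartition_cycleGraph_ncard_three⟩
end

section
/- If G is a graph of order n with C_{2f}(G) = n (i.e., the partition of V(G) into singletons is a 2-fair coalition partition), then every vertex of G has degree at least n − 2. -/
theorem Set.exists_eq_singleton_of_ncard_eq_natCard {V : Type*} [Finite V] {P : Set (Set V)}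
    (hne : ∀ A ∈ P, A.Nonempty) (hcov : ⋃₀ P = Set.univ) (hdisj : P.PairwiseDisjoint id)
    (hcard : P.ncard = Nat.card V) : ∀ A ∈ P, ∃ x, A = {x} := by
  have hblock : ∀ x, ∃ A ∈ P, x ∈ A := fun x => Set.mem_sUnion.mp (hcov ▸ Set.mem_univ x)
  choose g hgP hxg using hblock
  have hg_eq : ∀ A ∈ P, ∀ x ∈ A, g x = A := fun A hA x hx =>
    hdisj.elim_set (hgP x) hA x (hxg x) hx
  -- Sending each vertex to its block is onto `P`; equal cardinalities make it injective.
  have hsurj : Function.Surjective (fun x => (⟨g x, hgP x⟩ : P)) := by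
    rintro ⟨A, hA⟩
    obtain ⟨x, hx⟩ := hne A hA
    exact ⟨x, Subtype.ext (hg_eq A hA x hx)⟩
  have hinj := (hsurj.bijective_of_nat_card_le hcard.ge).injective
  intro A hA
  obtain ⟨x, hx⟩ := hne A hA
  refine ⟨x, Set.Subsingleton.eq_singleton_of_mem (fun y hy z hz => ?_) hx⟩
  exact hinj (Subtype.ext ((hg_eq A hA y hy).trans (hg_eq A hA z hz).symm))

namespace SimpleGraph

variable {V : Type*} (G : SimpleGraph V) {k : ℕ}

theorem exists_isKFairCoalPartition_ncard_eq_kFairCoalNum [Finite V]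
    (hpos : 0 < G.kFairCoalNum k) :
    ∃ P : Set (Set V), G.IsKFairCoalPartition k P ∧ P.ncard = G.kFairCoalNum k := by
  set S : Set ℕ := {n | ∃ P : Set (Set V), G.IsKFairCoalPartition k P ∧ P.ncard = n}
  have hbdd : BddAbove S := ⟨Nat.card (Set V), by rintro _ ⟨P, -, rfl⟩; exact P.ncard_le_card⟩
  have hne : S.Nonempty := by
    by_contra hS
    change 0 < sSup S at hpos
    rw [Set.not_nonempty_iff_eq_empty.mp hS, csSup_empty] at hpos
    exact lt_irrefl 0 hpos
  exact Nat.sSup_mem hne hbdd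

variable {G}

theorem KFairDom.adj_of_ncard_eq {S : Set V} (hS : G.KFairDom k S) (hfin : S.Finite)
    (hk : S.ncard = k) {w x : V} (hw : w ∉ S) (hx : x ∈ S) : G.Adj w x := by
  have hall : G.neighborSet w ∩ S = S :=
    Set.eq_of_subset_of_ncard_le Set.inter_subset_right (by rw [hS w hw, hk]) hfin
  exact (hall.ge hx).1

theorem IsKFairCoalPartition.exists_kFairDom_pair {P : Set (Set V)}
    (hP : G.IsKFairCoalPartition k P) (hsingle : ∀ A ∈ P, ∃ x, A = {x}) (hk : k ≠ 1) {v : V}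
    (hv : {v} ∈ P) : ∃ u, u ≠ v ∧ G.KFairDom k {v, u} := by
  rcases hP.2.2.2 {v} hv with ⟨-, hcard⟩ | ⟨-, B, hB, hBv, -, -, -, hdom⟩
  · exact absurd (Set.ncard_singleton v ▸ hcard).symm hk
  · obtain ⟨u, rfl⟩ := hsingle B hB
    exact ⟨u, fun h => hBv (h ▸ rfl), hdom⟩

theorem card_sub_ncard_le_degree [Fintype V] [DecidableRel G.Adj] {S : Set V} {v : V}
    (hadj : ∀ w ∉ S, G.Adj v w) : Fintype.card V - S.ncard ≤ G.degree v := by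
  calc Fintype.card V - S.ncard = Sᶜ.ncard := by rw [Set.ncard_compl, Nat.card_eq_fintype_card]
    _ ≤ (G.neighborSet v).ncard := Set.ncard_le_ncard hadj
    _ = G.degree v := by
      rw [Set.ncard_eq_toFinset_card', Set.toFinset_card, card_neighborSet_eq_degree]

end SimpleGraph

open SimpleGraph in
theorem degree_ge_of_twoFairCoalNum_eq_card {V : Type*} [Fintype V] (G : SimpleGraph V)
    [DecidableRel G.Adj] (h : G.kFairCoalNum 2 = Fintype.card V) :
    ∀ v : V, Fintype.card V - 2 ≤ G.degree v := by
  intro v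
  obtain ⟨P, hP, hcard⟩ := G.exists_isKFairCoalPartition_ncard_eq_kFairCoalNum
    (h ▸ Fintype.card_pos_iff.mpr ⟨v⟩)
  have hsingle : ∀ A ∈ P, ∃ x, A = {x} := Set.exists_eq_singleton_of_ncard_eq_natCard
    hP.1 hP.2.1 hP.2.2.1 (by rw [hcard, h, Nat.card_eq_fintype_card])
  obtain ⟨A, hA, hvA⟩ := Set.mem_sUnion.mp (hP.2.1 ▸ Set.mem_univ v)
  obtain ⟨x, rfl⟩ := hsingle A hA
  obtain rfl : v = x := hvA
  obtain ⟨u, huv, hdom⟩ := hP.exists_kFairDom_pair hsingle (by norm_num) hA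
  have hpair : ({v, u} : Set V).ncard = 2 := Set.ncard_pair huv.symm
  calc Fintype.card V - 2 = Fintype.card V - ({v, u} : Set V).ncard := by rw [hpair]
    _ ≤ G.degree v := card_sub_ncard_le_degree fun w hw =>
      (hdom.adj_of_ncard_eq (Set.toFinite _) hpair hw (Set.mem_insert v _)).symm
end

section
/- Let G be a 3-regular graph of order n. If X is a 2-fair dominating set of G with |X| = k, then k ≥ 2n/5. -/
namespace SimpleGraph

open Finset

variable {V : Type*} [Fintype V] {G : SimpleGraph V} [DecidableRel G.Adj]

theorem KFairDom.card_filter_adj {j : ℕ} {X : Set V} [DecidablePred (· ∈ X)]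
    (hX : G.KFairDom j X) {v : V} (hv : v ∉ X) : #{u ∈ X.toFinset | G.Adj v u} = j := by
  rw [← hX v hv, ← Set.ncard_coe_finset]
  congr 1
  ext u
  simp [and_comm]

/-- Double counting the edges between `X` and its complement: each vertex outside `X` sends
exactly `j` of them into `X`, each vertex of `X` receives at most `d`. -/
theorem KFairDom.mul_ncard_compl_le {j d : ℕ} {X : Set V} (hX : G.KFairDom j X)
    (hdeg : ∀ v ∈ X, G.degree v ≤ d) : Xᶜ.ncard * j ≤ X.ncard * d := by
  classical
  rw [Set.ncard_eq_toFinset_card', Set.ncard_eq_toFinset_card']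
  refine card_mul_le_card_mul G.Adj (fun v hv => ?_) (fun u hu => ?_)
  · exact (hX.card_filter_adj (by simpa using hv)).ge
  · calc #(Xᶜ.toFinset.bipartiteBelow G.Adj u) ≤ #(G.neighborFinset u) :=
          card_le_card fun v hv => by simp_all [bipartiteBelow, adj_comm]
      _ ≤ d := (card_neighborFinset_eq_degree G u).trans_le (hdeg u (by simpa using hu))

end SimpleGraph

theorem twoFairDom_card_cubic {V : Type*} [Fintype V] (G : SimpleGraph V)
    [DecidableRel G.Adj] (hreg : G.IsRegularOfDegree 3) (X : Set V) (k : ℕ)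
    (hX : G.KFairDom 2 X) (hk : X.ncard = k) : 2 * Fintype.card V ≤ 5 * k := by
  have hcount := hX.mul_ncard_compl_le fun v _ => (hreg v).le
  have hsplit := Set.ncard_add_ncard_compl X
  rw [Nat.card_eq_fintype_card] at hsplit
  omega
end

section
/- For the prism graph K_3 □ K_2 (the 3-regular graph on 6 vertices consisting of two triangles joined by a perfect matching), the 2-fair coalition number is 4; and for the complete bipartite graph K_{3,3}, the 2-fair coalition number is 3. -/
theorem Set.ncard_le_ncard_of_pairwiseDisjoint {α : Type*} {Q : Set (Set α)} {T : Set α}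
    (hT : T.Finite) (hne : ∀ X ∈ Q, X.Nonempty) (hdis : Q.PairwiseDisjoint id)
    (hsub : ∀ X ∈ Q, X ⊆ T) : Q.ncard ≤ T.ncard := by
  rcases Q.eq_empty_or_nonempty with rfl | ⟨X, hX⟩
  · simp
  have : Nonempty α := ⟨(hne X hX).some⟩
  choose! f hf using hne
  refine Set.ncard_le_ncard_of_injOn f (fun Y hY => hsub Y hY (hf Y hY)) ?_ hT
  intro X hX Y hY hXY
  by_contra hne
  exact Set.disjoint_left.1 (hdis hX hY hne) (hf X hX) (hXY ▸ hf Y hY)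

theorem Set.PairwiseDisjoint.subset_compl_union {α : Type*} {P : Set (Set α)} {A B X : Set α}
    (hdis : P.PairwiseDisjoint id) (hA : A ∈ P) (hB : B ∈ P) (hX : X ∈ P \ {A, B}) :
    X ⊆ (A ∪ B)ᶜ := by
  obtain ⟨hXP, hXAB⟩ := hX
  simp only [Set.mem_insert_iff, Set.mem_singleton_iff, not_or] at hXAB
  exact (Set.disjoint_union_right.2 ⟨hdis hXP hA hXAB.1, hdis hXP hB hXAB.2⟩).subset_compl_right

theorem Set.PairwiseDisjoint.exists_eq_insert_singletons {α : Type*} [Finite α] {P : Set (Set α)}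
    {A B : Set α} (hdis : P.PairwiseDisjoint id) (hne : ∀ X ∈ P, X.Nonempty) (h4 : P.ncard = 4)
    (hA : A ∈ P) (hB : B ∈ P) (hAB : A ≠ B) (hc : (A ∪ B)ᶜ.ncard ≤ 2) :
    ∃ y z, y ≠ z ∧ A ∪ B = {y, z}ᶜ ∧ P = {A, B, {y}, {z}} := by
  have hsub : {A, B} ⊆ P := Set.insert_subset hA (Set.singleton_subset_iff.2 hB)
  obtain ⟨C, D, hCD, hrest⟩ : ∃ C D, C ≠ D ∧ P \ {A, B} = {C, D} := by
    rw [← Set.ncard_eq_two, Set.ncard_sdiff hsub, Set.ncard_pair hAB, h4]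
  have hC : C ∈ P \ {A, B} := hrest ▸ Set.mem_insert C {D}
  have hD : D ∈ P \ {A, B} := hrest ▸ Set.mem_insert_of_mem C rfl
  have hCDc : C ∪ D ⊆ (A ∪ B)ᶜ :=
    Set.union_subset (hdis.subset_compl_union hA hB hC) (hdis.subset_compl_union hA hB hD)
  have hCD_card : (C ∪ D).ncard = C.ncard + D.ncard := Set.ncard_union_eq (hdis hC.1 hD.1 hCD)
  have hCD_le := Set.ncard_le_ncard hCDc
  have hC1 := (Set.ncard_pos).2 (hne C hC.1)
  have hD1 := (Set.ncard_pos).2 (hne D hD.1)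
  obtain ⟨y, rfl⟩ := Set.ncard_eq_one.1 (by omega : C.ncard = 1)
  obtain ⟨z, rfl⟩ := Set.ncard_eq_one.1 (by omega : D.ncard = 1)
  refine ⟨y, z, fun h => hCD (h ▸ rfl), ?_, ?_⟩
  · rw [eq_compl_comm, ← Set.singleton_union]
    exact Set.eq_of_subset_of_ncard_le hCDc (by omega)
  · rw [← Set.union_sdiff_cancel hsub, hrest, Set.insert_union, Set.singleton_union]

theorem Set.singleton_union_eq_compl_pair_swap {α : Type*} {E : Set α} {x y z : α}
    (h : {y} ∪ E = {x, z}ᶜ) (hy : y ∉ E) (hxz : x ≠ z) : {x} ∪ E = {y, z}ᶜ := by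
  ext v
  have hv := Set.ext_iff.1 h v
  have hxy : y ≠ x := fun hyx => (Set.ext_iff.1 h y).1 (Or.inl rfl) (Or.inl hyx)
  have hx : x ∉ E := fun hx => (Set.ext_iff.1 h x).1 (Or.inr hx) (Or.inl rfl)
  simp only [Set.mem_union, Set.mem_singleton_iff, Set.mem_compl_iff, Set.mem_insert_iff] at *
  grind

namespace SimpleGraph

variable {V : Type*} {G : SimpleGraph V} {k : ℕ}

instance boxProdDecidableRel {α β : Type*} [DecidableEq α] [DecidableEq β]
    {G : SimpleGraph α} {H : SimpleGraph β} [DecidableRel G.Adj] [DecidableRel H.Adj] :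
    DecidableRel (G □ H).Adj :=
  fun _ _ => decidable_of_iff' _ boxProd_adj

instance completeBipartiteGraphDecidableRel {α β : Type*} :
    DecidableRel (completeBipartiteGraph α β).Adj :=
  fun v w => inferInstanceAs (Decidable (v.isLeft ∧ w.isRight ∨ v.isRight ∧ w.isLeft))

theorem kFairDom_univ : G.KFairDom k Set.univ :=
  fun _ hv => (hv trivial).elim

theorem kFairDom_coe_iff [DecidableRel G.Adj] (s : Finset V) :
    G.KFairDom k ↑s ↔ ∀ v ∉ s, {w ∈ s | G.Adj v w}.card = k := by
  refine forall_congr' fun v => imp_congr_right fun _ => ?_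
  rw [← Set.ncard_coe_finset, Finset.coe_filter, Set.inter_comm]
  rfl

instance [Fintype V] [DecidableEq V] [DecidableRel G.Adj] (s : Finset V) :
    Decidable (G.KFairDom k ↑s) :=
  decidable_of_iff' _ (kFairDom_coe_iff s)

theorem le_ncard_of_kFairDom [Finite V] {m : ℕ}
    (h : ∀ s : Finset V, G.KFairDom k ↑s → m ≤ s.card)
    {S : Set V} (hS : G.KFairDom k S) : m ≤ S.ncard := by
  obtain ⟨s, rfl⟩ := S.toFinite.exists_finset_coe
  rw [Set.ncard_coe_finset]
  exact h s hS

theorem adj_of_kFairDom_compl_pair {u w : V} [Fintype (G.neighborSet u)]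
    (h : G.KFairDom k {u, w}ᶜ) (hu : G.degree u ≠ k) : G.Adj u w := by
  by_contra huw
  have hN : G.neighborSet u ∩ {u, w}ᶜ = G.neighborSet u := by
    refine Set.inter_eq_left.2 fun v hv => ?_
    rintro (rfl | rfl)
    exacts [G.irrefl hv, huw hv]
  apply hu
  rw [← card_neighborSet_eq_degree, ← Nat.card_eq_fintype_card, Nat.card_coe_set_eq, ← hN]
  exact h u (by simp)

theorem IsKFairCoalPartition.exists_partner {P : Set (Set V)} (hP : G.IsKFairCoalPartition k P)
    (hk : ∀ S, G.KFairDom k S → S.ncard ≠ k) {A : Set V} (hA : A ∈ P) :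
    ∃ B ∈ P, B ≠ A ∧ Disjoint A B ∧ G.KFairDom k (A ∪ B) := by
  obtain ⟨hdom, hcard⟩ | ⟨-, B, hB, hBA, hdisj, -, -, hAB⟩ := hP.2.2.2 A hA
  · exact (hk A hdom hcard).elim
  · exact ⟨B, hB, hBA, hdisj, hAB⟩

theorem IsKFairCoalPartition.ncard_add_le [Finite V] {P : Set (Set V)} {m : ℕ}
    (hP : G.IsKFairCoalPartition k P) (hkm : k < m)
    (hmin : ∀ S, G.KFairDom k S → m ≤ S.ncard) : P.ncard + m ≤ Nat.card V + 2 := by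
  rcases P.eq_empty_or_nonempty with rfl | ⟨A, hA⟩
  · have := hmin _ kFairDom_univ
    rw [Set.ncard_univ] at this
    simp only [Set.ncard_empty]
    omega
  obtain ⟨B, hB, hBA, -, hAB⟩ :=
    hP.exists_partner (fun S hS => ((hmin S hS).trans_lt' hkm).ne') hA
  obtain ⟨hne, -, hdis, -⟩ := hP
  have hrest : (P \ {A, B}).ncard ≤ (A ∪ B)ᶜ.ncard :=
    Set.ncard_le_ncard_of_pairwiseDisjoint (Set.toFinite _) (fun X hX => hne X hX.1)
      (hdis.subset Set.sdiff_subset) fun X hX => hdis.subset_compl_union hA hB hX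
  have := Set.ncard_le_ncard_sdiff_add_ncard P {A, B}
  have := Set.ncard_pair hBA.symm
  have := Set.ncard_add_ncard_compl (A ∪ B)
  have := hmin _ hAB
  omega

theorem IsKFairCoalPartition.ncard_ne_four [Fintype V] [DecidableRel G.Adj] {P : Set (Set V)}
    (hP : G.IsKFairCoalPartition 2 P) (hV : Fintype.card V = 6) (hG : G.IsRegularOfDegree 3)
    (hG₃ : G.CliqueFree 3) (hmin : ∀ S, G.KFairDom 2 S → 4 ≤ S.ncard) : P.ncard ≠ 4 := by
  classical
  intro h4
  have hk (S : Set V) (hS : G.KFairDom 2 S) : S.ncard ≠ 2 := by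
    have := hmin S hS
    omega
  have partner {A : Set V} (hA : A ∈ P) := hP.exists_partner hk hA
  have hcompl {A B : Set V} (h : G.KFairDom 2 (A ∪ B)) : (A ∪ B)ᶜ.ncard ≤ 2 := by
    have := Set.ncard_add_ncard_compl (A ∪ B)
    have := hmin _ h
    rw [Nat.card_eq_fintype_card, hV] at *
    omega
  obtain ⟨hne, -, hdis, -⟩ := hP
  obtain ⟨A, hA⟩ : P.Nonempty := Set.nonempty_of_ncard_ne_zero (by omega)
  obtain ⟨B, hB, hBA, -, hAB⟩ := partner hA
  obtain ⟨y, _, -, -, hPy⟩ :=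
    hdis.exists_eq_insert_singletons hne h4 hA hB hBA.symm (hcompl hAB)
  have hy : {y} ∈ P := by simp [hPy]
  obtain ⟨E, hE, hEy, hyE, hyE_dom⟩ := partner hy
  obtain ⟨x, z, hxz, hyEc, rfl⟩ :=
    hdis.exists_eq_insert_singletons hne h4 hy hE hEy.symm (hcompl hyE_dom)
  have hE_partner (w : V) (hw : {w} ∈ ({{y}, E, {x}, {z}} : Set (Set V))) :
      G.KFairDom 2 ({w} ∪ E) := by
    obtain ⟨F, hF, hFw, -, hwF⟩ := partner hw
    have := hmin _ hwF
    have := Set.ncard_union_le {w} F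
    rcases hF with rfl | rfl | rfl | rfl <;> simp_all
  have hyE' : y ∉ E := Set.disjoint_singleton_left.1 hyE
  have hxE := Set.singleton_union_eq_compl_pair_swap hyEc hyE' hxz
  have hzE :=
    Set.singleton_union_eq_compl_pair_swap ((Set.pair_comm x z).symm ▸ hyEc) hyE' hxz.symm
  have hdeg (u : V) : G.degree u ≠ 2 := by rw [hG u]; norm_num
  have hadj_xz := adj_of_kFairDom_compl_pair (hyEc ▸ hE_partner y (by simp)) (hdeg x)
  have hadj_yz := adj_of_kFairDom_compl_pair (hxE ▸ hE_partner x (by simp)) (hdeg y)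
  have hadj_yx := adj_of_kFairDom_compl_pair (hzE ▸ hE_partner z (by simp)) (hdeg y)
  exact hG₃ {x, y, z} (is3Clique_triple_iff.2 ⟨hadj_yx.symm, hadj_xz, hadj_yz⟩)

theorem kFairCoalNum_eq_s19 {n : ℕ} {P : Set (Set V)} (hP : G.IsKFairCoalPartition k P)
    (hn : P.ncard = n) (hmax : ∀ Q, G.IsKFairCoalPartition k Q → Q.ncard ≤ n) :
    G.kFairCoalNum k = n :=
  IsGreatest.csSup_eq ⟨⟨P, hP, hn⟩, by rintro _ ⟨Q, hQ, rfl⟩; exact hmax Q hQ⟩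

theorem isKFairCoalPartition_image_coe [DecidableEq V] (P : Finset (Finset V))
    (hne : ∀ A ∈ P, A.Nonempty) (hcov : ∀ v, ∃ A ∈ P, v ∈ A)
    (hdis : ∀ A ∈ P, ∀ B ∈ P, A ≠ B → Disjoint A B)
    (hnot : ∀ A ∈ P, ¬ G.KFairDom k ↑A)
    (hcoal : ∀ A ∈ P, ∃ B ∈ P, B ≠ A ∧ G.KFairDom k ↑(A ∪ B)) :
    G.IsKFairCoalPartition k (((↑) : Finset V → Set V) '' P) := by
  refine ⟨?_, ?_, ?_, ?_⟩
  · rintro _ ⟨A, hA, rfl⟩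
    exact Finset.coe_nonempty.2 (hne A hA)
  · refine Set.eq_univ_of_forall fun v => ?_
    obtain ⟨A, hA, hv⟩ := hcov v
    exact ⟨A, ⟨A, hA, rfl⟩, hv⟩
  · rintro _ ⟨A, hA, rfl⟩ _ ⟨B, hB, rfl⟩ hAB
    exact Finset.disjoint_coe.2 (hdis A hA B hB (ne_of_apply_ne _ hAB))
  · rintro _ ⟨A, hA, rfl⟩
    obtain ⟨B, hB, hBA, hAB⟩ := hcoal A hA
    refine Or.inr ⟨hnot A hA, B, ⟨B, hB, rfl⟩, Finset.coe_injective.ne hBA,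
      Finset.disjoint_coe.2 (hdis A hA B hB hBA.symm), hnot A hA, hnot B hB, ?_⟩
    rwa [← Finset.coe_union]

theorem prism_kFairCoalNum_two :
    ((completeGraph (Fin 3)).boxProd (completeGraph (Fin 2))).kFairCoalNum 2 = 4 := by
  refine kFairCoalNum_eq_s19 (isKFairCoalPartition_image_coe
    {{(0, 0), (1, 0), (2, 0)}, {(0, 1)}, {(1, 1)}, {(2, 1)}}
    (by decide) (by decide) (by decide) (by decide) (by decide)) ?_ fun Q hQ => ?_
  · rw [Set.ncard_image_of_injective _ Finset.coe_injective, Set.ncard_coe_finset]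
    rfl
  · have := hQ.ncard_add_le (m := 4) (by norm_num) fun S => le_ncard_of_kFairDom (by decide)
    simp only [Nat.card_eq_fintype_card, Fintype.card_prod, Fintype.card_fin] at this
    omega

theorem completeBipartiteGraph_kFairCoalNum_two :
    (completeBipartiteGraph (Fin 3) (Fin 3)).kFairCoalNum 2 = 3 := by
  refine kFairCoalNum_eq_s19 (isKFairCoalPartition_image_coe
    {{.inl 0, .inr 0}, {.inl 1, .inr 1}, {.inl 2, .inr 2}}
    (by decide) (by decide) (by decide) (by decide) (by decide)) ?_ fun Q hQ => ?_
  · rw [Set.ncard_image_of_injective _ Finset.coe_injective, Set.ncard_coe_finset]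
    rfl
  · have hmin : ∀ S, (completeBipartiteGraph (Fin 3) (Fin 3)).KFairDom 2 S → 4 ≤ S.ncard :=
      fun S => le_ncard_of_kFairDom (by decide)
    have hle := hQ.ncard_add_le (by norm_num) hmin
    simp only [Nat.card_eq_fintype_card, Fintype.card_sum, Fintype.card_fin] at hle
    have hne := hQ.ncard_ne_four rfl (by unfold IsRegularOfDegree; decide)
      ((CompleteBipartiteGraph.bicoloring _ _).colorable.cliqueFree (by norm_num)) hmin
    omega

end SimpleGraph

theorem twoFairCoalNum_cubic_order_six :
    ((SimpleGraph.completeGraph (Fin 3)).boxProd (SimpleGraph.completeGraph (Fin 2))).kFairCoalNum 2 = 4 ∧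
    (completeBipartiteGraph (Fin 3) (Fin 3)).kFairCoalNum 2 = 3 :=
  ⟨SimpleGraph.prism_kFairCoalNum_two, SimpleGraph.completeBipartiteGraph_kFairCoalNum_two⟩
end
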